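/- arXiv:1204.0206 — 5 statements merged into one kernel-verified Lean document; each statement's English description precedes it below -/
import Mathlib

section
/- Let R : ℝ → ℝ be continuous, even, nonnegative, and integrable on [0,∞). Let λ be the uniform probability (Lebesgue) measure on [0,1]. Then lim_{a→∞} a · ∫₀¹∫₀¹ R(a(u−v)) dλ(u) dλ(v) = 2 ∫₀^∞ R(t) dt. -/
/-!
After the substitution `x = a (u - v)`, `a ∫₀¹ R (a (u - v)) dv = ∫_{a(u-1)}^{au} R`, which for
`0 < u < 1` tends to `∫_ℝ R` as `a → ∞` and is bounded by `∫_ℝ |R|`; dominated convergence in `u`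
gives the limit `∫_ℝ R`, and evenness turns this into `2 ∫₀^∞ R`.
-/

open MeasureTheory Filter Set Topology intervalIntegral

section Even

theorem integrable_of_even_of_integrableOn_Ici {E : Type*} [NormedAddCommGroup E] {f : ℝ → E}
    (he : ∀ x, f (-x) = f x) (hf : IntegrableOn f (Ici 0)) : Integrable f := by
  have hneg : MeasurableEmbedding fun x : ℝ => -x := (Homeomorph.neg ℝ).measurableEmbedding
  have hIic : IntegrableOn f (Iic 0) := by
    have h : IntegrableOn (f ∘ fun x => -x) ((fun x : ℝ => -x) ⁻¹' Ici 0) := by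
      rwa [← hneg.integrableOn_map_iff, Measure.map_neg_eq_self]
    rw [neg_preimage, neg_Ici, neg_zero] at h
    exact h.congr_fun (fun x _ => he x) measurableSet_Iic
  rw [← integrableOn_univ, ← Iic_union_Ici]
  exact hIic.union hf

theorem integral_eq_two_mul_integral_Ici_of_even {f : ℝ → ℝ} (he : ∀ x, f (-x) = f x) :
    ∫ x, f x = 2 * ∫ x in Ici 0, f x := by
  have habs : (fun x => f |x|) = f := funext fun x => by
    rcases abs_choice x with h | h <;> rw [h]
    exact he x
  rw [integral_Ici_eq_integral_Ioi, ← integral_comp_abs, habs]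

end Even

section Scaling

variable {E : Type*} [NormedAddCommGroup E] [NormedSpace ℝ E] {f : ℝ → E}

theorem smul_integral_Icc_comp_mul_sub {a : ℝ} (ha : a ≠ 0) (u : ℝ) :
    a • ∫ v in Icc (0 : ℝ) 1, f (a * (u - v)) = ∫ x in a * (u - 1)..a * u, f x := by
  rw [integral_Icc_eq_integral_Ioc, ← integral_of_le zero_le_one,
    integral_comp_sub_left (fun w => f (a * w)), integral_comp_mul_left f ha, smul_inv_smul₀ ha,
    sub_zero]

theorem continuous_intervalIntegral_of_integrable (hf : Integrable f) {g h : ℝ → ℝ}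
    (hg : Continuous g) (hh : Continuous h) : Continuous fun u => ∫ x in g u..h u, f x := by
  have hsub : (fun u => ∫ x in g u..h u, f x) =
      fun u => (∫ x in (0 : ℝ)..h u, f x) - ∫ x in (0 : ℝ)..g u, f x :=
    funext fun u => (integral_interval_sub_left hf.intervalIntegrable hf.intervalIntegrable).symm
  rw [hsub]
  exact ((hf.continuous_primitive 0).comp hh).sub ((hf.continuous_primitive 0).comp hg)

theorem norm_intervalIntegral_le_integral_norm (hf : Integrable f) {a b : ℝ} (hab : a ≤ b) :
    ‖∫ x in a..b, f x‖ ≤ ∫ x, ‖f x‖ :=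
  (intervalIntegral.norm_integral_le_integral_norm hab).trans <| by
    rw [integral_of_le hab]
    exact setIntegral_le_integral hf.norm (Eventually.of_forall fun _ => norm_nonneg _)

theorem tendsto_integral_Ioo_intervalIntegral_mul_sub [CompleteSpace E] (hf : Integrable f) :
    Tendsto (fun a : ℝ => ∫ u in Ioo (0 : ℝ) 1, ∫ x in a * (u - 1)..a * u, f x) atTop
      (𝓝 (∫ x, f x)) := by
  have hconst : ∫ _ in Ioo (0 : ℝ) 1, ∫ x, f x = ∫ x, f x := by simp
  rw [← hconst]
  refine tendsto_integral_filter_of_dominated_convergence (fun _ => ∫ x, ‖f x‖) ?_ ?_ ?_ ?_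
  · exact Eventually.of_forall fun a => (continuous_intervalIntegral_of_integrable hf
      (continuous_const.mul (continuous_id.sub continuous_const))
      (continuous_const.mul continuous_id)).aestronglyMeasurable
  · filter_upwards [eventually_ge_atTop 0] with a ha
    refine ae_restrict_of_forall_mem measurableSet_Ioo fun u _ => ?_
    exact norm_intervalIntegral_le_integral_norm hf
      (mul_le_mul_of_nonneg_left (sub_le_self u zero_le_one) ha)
  · exact integrableOn_const (by simp [Real.volume_Ioo])
  · refine ae_restrict_of_forall_mem measurableSet_Ioo fun u hu => ?_
    exact intervalIntegral_tendsto_integral hf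
      (tendsto_id.atTop_mul_const_of_neg (sub_neg.2 hu.2)) (tendsto_id.atTop_mul_const hu.1)

end Scaling

theorem stmt2_general (R : ℝ → ℝ) (he : ∀ t, R (-t) = R t)
    (hi : MeasureTheory.IntegrableOn R (Set.Ici 0)) :
    Filter.Tendsto
      (fun a : ℝ => a * ∫ u in Set.Icc (0:ℝ) 1, ∫ v in Set.Icc (0:ℝ) 1, R (a * (u - v)))
      Filter.atTop (nhds (2 * ∫ t in Set.Ici (0:ℝ), R t)) := by
  rw [← integral_eq_two_mul_integral_Ici_of_even he]
  refine (tendsto_integral_Ioo_intervalIntegral_mul_sub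
    (integrable_of_even_of_integrableOn_Ici he hi)).congr' ?_
  filter_upwards [eventually_gt_atTop 0] with a ha
  rw [← MeasureTheory.integral_const_mul, integral_Icc_eq_integral_Ioo]
  exact setIntegral_congr_fun measurableSet_Ioo fun u _ =>
    (smul_integral_Icc_comp_mul_sub ha.ne' u).symm

theorem stmt2 (R : ℝ → ℝ) (hc : Continuous R) (he : ∀ t, R (-t) = R t)
    (hnn : ∀ t, 0 ≤ R t) (hi : MeasureTheory.IntegrableOn R (Set.Ici 0)) :
    Filter.Tendsto
      (fun a : ℝ => a * ∫ u in Set.Icc (0:ℝ) 1, ∫ v in Set.Icc (0:ℝ) 1, R (a * (u - v)))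
      Filter.atTop (nhds (2 * ∫ t in Set.Ici (0:ℝ), R t)) :=
  stmt2_general R he hi
end

section
/- Let R(t) = e^{-|t|} for t ∈ ℝ, and for a > 0 define the measure μ on [0,1] by μ = (1/(a+2))δ₀ + (1/(a+2))δ₁ + (a/(a+2))λ, where λ is Lebesgue measure on (0,1). Then for every v ∈ [0,1], ∫₀¹ R(a(u−v)) μ(du) = 2/(a+2). -/
/-! Splitting the Lebesgue part at `v` gives
`∫₀¹ e^{-a|u-v|} du = (2 - e^{-av} - e^{-a(1-v)}) / a`; the atoms at `0` and `1` contribute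
exactly the two exponentials `e^{-av}` and `e^{-a(1-v)}`, which therefore cancel. -/

open MeasureTheory Real Set

theorem integral_exp_mul_sub {k : ℝ} (hk : k ≠ 0) (b c v : ℝ) :
    ∫ u in b..c, exp (k * (u - v)) = (exp (k * (c - v)) - exp (k * (b - v))) / k := by
  rw [sub_div]
  refine intervalIntegral.integral_eq_sub_of_hasDerivAt (f := fun u ↦ exp (k * (u - v)) / k)
    (fun u _ ↦ ?_) ((by fun_prop : Continuous _).intervalIntegrable b c)
  simpa [hk] using (((hasDerivAt_id u).sub_const v).const_mul k).exp.div_const k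

theorem integral_exp_neg_mul_abs_sub {a b c v : ℝ} (ha : a ≠ 0) (hbv : b ≤ v)
    (hvc : v ≤ c) :
    ∫ u in b..c, exp (-a * |u - v|) = (2 - exp (-a * (v - b)) - exp (-a * (c - v))) / a := by
  have hcont : Continuous fun u ↦ exp (-a * |u - v|) := by fun_prop
  have hleft : ∫ u in b..v, exp (-a * |u - v|) = ∫ u in b..v, exp (a * (u - v)) := by
    refine intervalIntegral.integral_congr fun u hu ↦ ?_
    rw [uIcc_of_le hbv] at hu
    rw [abs_of_nonpos (by linarith [hu.2])]
    ring_nf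
  have hright : ∫ u in v..c, exp (-a * |u - v|) = ∫ u in v..c, exp (-a * (u - v)) := by
    refine intervalIntegral.integral_congr fun u hu ↦ ?_
    rw [uIcc_of_le hvc] at hu
    rw [abs_of_nonneg (by linarith [hu.1])]
  rw [← intervalIntegral.integral_add_adjacent_intervals (hcont.intervalIntegrable b v)
      (hcont.intervalIntegrable v c), hleft, hright, integral_exp_mul_sub ha,
    integral_exp_mul_sub (neg_ne_zero.mpr ha)]
  simp only [sub_self, mul_zero, exp_zero]
  field_simp
  ring_nf

theorem integral_smul_dirac_add_smul_dirac_add_smul_restrict_Ioo {f : ℝ → ℝ} {b c : ℝ}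
    (hbc : b ≤ c) (hf : IntervalIntegrable f volume b c) {p q r : ENNReal} (hp : p ≠ ⊤)
    (hq : q ≠ ⊤) (hr : r ≠ ⊤) :
    ∫ u, f u ∂(p • Measure.dirac b + q • Measure.dirac c +
        r • volume.restrict (Ioo b c)) =
      p.toReal * f b + q.toReal * f c + r.toReal * ∫ u in b..c, f u := by
  have hb : Integrable f (p • Measure.dirac b) :=
    (integrable_dirac enorm_lt_top).smul_measure hp
  have hc : Integrable f (q • Measure.dirac c) :=
    (integrable_dirac enorm_lt_top).smul_measure hq
  have hI : Integrable f (r • volume.restrict (Ioo b c)) :=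
    ((intervalIntegrable_iff_integrableOn_Ioo_of_le hbc).mp hf).smul_measure hr
  rw [integral_add_measure (hb.add_measure hc) hI, integral_add_measure hb hc,
    integral_smul_measure, integral_smul_measure, integral_smul_measure, integral_dirac,
    integral_dirac, intervalIntegral.integral_of_le hbc, integral_Ioc_eq_integral_Ioo]
  simp only [smul_eq_mul]

theorem stmt3 (a : ℝ) (ha : 0 < a) :
    let R : ℝ → ℝ := fun t => Real.exp (-|t|)
    let μ : Measure ℝ :=
      ENNReal.ofReal (1/(a+2)) • Measure.dirac 0 +
      ENNReal.ofReal (1/(a+2)) • Measure.dirac 1 +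
      ENNReal.ofReal (a/(a+2)) • (volume : Measure ℝ).restrict (Set.Ioo (0:ℝ) 1)
    ∀ v ∈ Set.Icc (0:ℝ) 1, (∫ u, R (a * (u - v)) ∂μ) = 2/(a+2) := by
  intro R μ v ⟨hv0, hv1⟩
  have hR : ∀ u, R (a * (u - v)) = exp (-a * |u - v|) := fun u ↦ by
    simp only [R, abs_mul, abs_of_pos ha, neg_mul]
  simp only [μ, hR]
  rw [integral_smul_dirac_add_smul_dirac_add_smul_restrict_Ioo zero_le_one
      ((by fun_prop : Continuous fun u ↦ exp (-a * |u - v|)).intervalIntegrable 0 1)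
      ENNReal.ofReal_ne_top ENNReal.ofReal_ne_top ENNReal.ofReal_ne_top,
    integral_exp_neg_mul_abs_sub ha.ne' hv0 hv1, ENNReal.toReal_ofReal (by positivity),
    ENNReal.toReal_ofReal (by positivity), zero_sub, abs_neg, abs_of_nonneg hv0,
    abs_of_nonneg (sub_nonneg.mpr hv1), sub_zero]
  field_simp
  ring
end

section
/- Let R : [0,a]² → ℝ be a continuous symmetric nonnegative-definite kernel. Suppose the two-point condition R(t,0) + R(t,a) ≥ (R(0,0) + 2R(0,a) + R(a,a))/2 > 0 holds for all t ∈ [0,a]. Then the probability measure μ = ½δ₀ + ½δ_a minimizes the energy ∫∫ R(s,t) μ(ds)μ(dt) over all Borel probability measures on [0,a], and the minimal energy equals (R(0,0) + 2R(0,a) + R(a,a))/4. -/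
/-!
Write `E(μ, ν) = ∫∫ R(s, t) ν(dt) μ(ds)` and `μ₀ = ½δ₀ + ½δ_a`. Positive definiteness of `R`
says `E(ν - μ₀) ≥ 0`, i.e. `2 E(ν, μ₀) ≤ E(ν, ν) + E(μ₀, μ₀)`, for measures carried by `[0, a]`.
For finitely supported measures this is the hypothesis itself; in general, push both measures
forward along simple functions converging to the identity on `[0, a]` and pass to the limit by
dominated convergence. The two-point condition says that the potential
`s ↦ E(δ_s, μ₀) = (R(s, 0) + R(s, a)) / 2` is at least `E(μ₀, μ₀)` on `[0, a]`, so
`E(ν, μ₀) ≥ E(μ₀, μ₀)` and therefore `E(ν, ν) ≥ E(μ₀, μ₀)`.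
-/

open MeasureTheory Filter Topology
open scoped ENNReal

def IsPosDefKernelOn {α : Type*} (R : α → α → ℝ) (S : Set α) : Prop :=
  ∀ (n : ℕ) (t : Fin n → α) (c : Fin n → ℝ), (∀ i, t i ∈ S) →
    0 ≤ ∑ i, ∑ j, c i * c j * R (t i) (t j)

namespace IsPosDefKernelOn

variable {α : Type*} {R : α → α → ℝ} {S : Set α}

theorem sum_finset_nonneg (hR : IsPosDefKernelOn R S) {s : Finset α} (hs : ↑s ⊆ S)
    (c : α → ℝ) : 0 ≤ ∑ x ∈ s, ∑ y ∈ s, c x * c y * R x y := by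
  let e := s.equivFin.symm
  calc 0 ≤ ∑ i, ∑ j, c (e i) * c (e j) * R (e i) (e j) := hR _ _ _ fun i => hs (e i).2
    _ = ∑ x : s, ∑ y : s, c x * c y * R x y :=
      Fintype.sum_equiv e _ _ fun i => Fintype.sum_equiv e _ _ fun j => rfl
    _ = ∑ x ∈ s, ∑ y ∈ s, c x * c y * R x y := by
      rw [← Finset.sum_coe_sort s]
      exact Fintype.sum_congr _ _ fun x => Finset.sum_coe_sort s (fun y => c x * c y * R x y)

theorem two_mul_sum_le (hR : IsPosDefKernelOn R S) (hsymm : ∀ x y, R x y = R y x)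
    {s : Finset α} (hs : ↑s ⊆ S) (p q : α → ℝ) :
    2 * ∑ x ∈ s, ∑ y ∈ s, p x * q y * R x y ≤
      ∑ x ∈ s, ∑ y ∈ s, p x * p y * R x y + ∑ x ∈ s, ∑ y ∈ s, q x * q y * R x y := by
  have hpq := hR.sum_finset_nonneg hs (p - q)
  have hqp : ∑ x ∈ s, ∑ y ∈ s, q x * p y * R x y = ∑ x ∈ s, ∑ y ∈ s, p x * q y * R x y := by
    rw [Finset.sum_comm]
    simp_rw [hsymm _, mul_comm (q _)]
  simp only [Pi.sub_apply, sub_mul, mul_sub, Finset.sum_sub_distrib] at hpq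
  linarith

end IsPosDefKernelOn

namespace MeasureTheory.SimpleFunc

variable {α β : Type*} [MeasurableSpace α] {μ ν : Measure α} [IsFiniteMeasure μ]
  [IsFiniteMeasure ν]

theorem integral_comp_eq_sum (g : SimpleFunc α β) (h : β → ℝ) :
    ∫ s, h (g s) ∂μ = ∑ x ∈ g.range, μ.real (g ⁻¹' {x}) * h x := by
  have hunion : (⋃ x ∈ g.range, g ⁻¹' {x}) = Set.univ :=
    Set.eq_univ_of_forall fun s => by simp
  rw [← setIntegral_univ, ← hunion, integral_biUnion_finset (f := fun s => h (g s)) g.range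
    (fun x _ => g.measurableSet_fiber x) (Set.pairwiseDisjoint_fiber g _)
    fun x _ => (g.map h).integrable_of_isFiniteMeasure.integrableOn]
  refine Finset.sum_congr rfl fun x _ => ?_
  rw [setIntegral_congr_fun (g.measurableSet_fiber x) (g := fun _ => h x) fun s hs => by rw [hs],
    setIntegral_const, smul_eq_mul]

theorem integral_integral_comp_eq_sum (g : SimpleFunc α β) (R : β → β → ℝ) :
    ∫ s, ∫ t, R (g s) (g t) ∂ν ∂μ =
      ∑ x ∈ g.range, ∑ y ∈ g.range, μ.real (g ⁻¹' {x}) * ν.real (g ⁻¹' {y}) * R x y := by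
  simp_rw [g.integral_comp_eq_sum (μ := ν), g.integral_comp_eq_sum (μ := μ) (fun x =>
    ∑ y ∈ g.range, ν.real (g ⁻¹' {y}) * R x y), Finset.mul_sum, mul_assoc]

end MeasureTheory.SimpleFunc

theorem IsPosDefKernelOn.two_mul_integral_integral_comp_le {α β : Type*} [MeasurableSpace α]
    {μ ν : Measure α} [IsFiniteMeasure μ] [IsFiniteMeasure ν] {R : β → β → ℝ} {S : Set β}
    (hR : IsPosDefKernelOn R S) (hsymm : ∀ x y, R x y = R y x) (g : SimpleFunc α β)
    (hg : ∀ s, g s ∈ S) :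
    2 * ∫ s, ∫ t, R (g s) (g t) ∂ν ∂μ ≤
      ∫ s, ∫ t, R (g s) (g t) ∂μ ∂μ + ∫ s, ∫ t, R (g s) (g t) ∂ν ∂ν := by
  simp only [g.integral_integral_comp_eq_sum]
  refine hR.two_mul_sum_le hsymm ?_ _ _
  rw [SimpleFunc.coe_range]
  exact Set.range_subset_iff.2 hg

theorem tendsto_integral_integral_comp {α : Type*} [TopologicalSpace α] [MeasurableSpace α]
    [OpensMeasurableSpace α] {μ ν : Measure α} [IsFiniteMeasure μ] [IsFiniteMeasure ν]
    {R : α → α → ℝ} (hR : Continuous fun p : α × α => R p.1 p.2) {K : Set α} (hK : IsCompact K)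
    (hμ : ∀ᵐ s ∂μ, s ∈ K) (hν : ∀ᵐ t ∂ν, t ∈ K) (π : ℕ → SimpleFunc α α)
    (hπK : ∀ n x, π n x ∈ K) (hπ : ∀ x ∈ K, Tendsto (fun n => π n x) atTop (𝓝 x)) :
    Tendsto (fun n => ∫ s, ∫ t, R (π n s) (π n t) ∂ν ∂μ) atTop (𝓝 (∫ s, ∫ t, R s t ∂ν ∂μ)) := by
  obtain ⟨M, hM⟩ := (hK.prod hK).exists_bound_of_continuousOn hR.continuousOn
  have hbound : ∀ n s t, ‖R (π n s) (π n t)‖ ≤ M := fun n s t =>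
    hM (_, _) ⟨hπK n s, hπK n t⟩
  have hlim : ∀ s ∈ K, ∀ t ∈ K, Tendsto (fun n => R (π n s) (π n t)) atTop (𝓝 (R s t)) :=
    fun s hs t ht => (hR.tendsto (s, t)).comp ((hπ s hs).prodMk_nhds (hπ t ht))
  have hinner : ∀ s ∈ K,
      Tendsto (fun n => ∫ t, R (π n s) (π n t) ∂ν) atTop (𝓝 (∫ t, R s t ∂ν)) := by
    intro s hs
    refine tendsto_integral_of_dominated_convergence (fun _ => M) (fun n => ?_)
      (integrable_const M) (fun n => ae_of_all _ (hbound n s)) ?_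
    · exact ((hR.comp (continuous_const.prodMk continuous_id)).measurable.comp
        (π n).measurable).aestronglyMeasurable
    · filter_upwards [hν] with t ht using hlim s hs t ht
  refine tendsto_integral_of_dominated_convergence (fun _ => M * ν.real Set.univ) (fun n => ?_)
    (integrable_const _) (fun n => ae_of_all _ fun s => ?_) ?_
  · exact ((π n).map fun x => ∫ t, R x (π n t) ∂ν).aestronglyMeasurable
  · exact norm_integral_le_of_norm_le_const (ae_of_all _ (hbound n s))
  · filter_upwards [hμ] with s hs using hinner s hs

theorem IsPosDefKernelOn.two_mul_integral_integral_le {α : Type*} [PseudoEMetricSpace α]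
    [MeasurableSpace α] [OpensMeasurableSpace α] {μ ν : Measure α} [IsFiniteMeasure μ]
    [IsFiniteMeasure ν] {R : α → α → ℝ} {K : Set α} (hR : IsPosDefKernelOn R K)
    (hsymm : ∀ x y, R x y = R y x) (hRc : Continuous fun p : α × α => R p.1 p.2)
    (hK : IsCompact K) (hμ : ∀ᵐ s ∂μ, s ∈ K) (hν : ∀ᵐ t ∂ν, t ∈ K) :
    2 * ∫ s, ∫ t, R s t ∂ν ∂μ ≤ ∫ s, ∫ t, R s t ∂μ ∂μ + ∫ s, ∫ t, R s t ∂ν ∂ν := by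
  rcases K.eq_empty_or_nonempty with rfl | ⟨x₀, hx₀⟩
  · have hμ0 : μ = 0 := by simpa using hμ
    have hν0 : ν = 0 := by simpa using hν
    simp [hμ0, hν0]
  have : TopologicalSpace.SeparableSpace K := hK.isSeparable.separableSpace
  let π n := SimpleFunc.approxOn id measurable_id K x₀ hx₀ n
  have hπK : ∀ n x, π n x ∈ K := SimpleFunc.approxOn_mem measurable_id hx₀
  have hπ : ∀ x ∈ K, Tendsto (fun n => π n x) atTop (𝓝 x) := fun x hx =>
    SimpleFunc.tendsto_approxOn measurable_id hx₀ (subset_closure hx)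
  exact le_of_tendsto_of_tendsto'
    ((tendsto_integral_integral_comp hRc hK hμ hν π hπK hπ).const_mul 2)
    ((tendsto_integral_integral_comp hRc hK hμ hμ π hπK hπ).add
      (tendsto_integral_integral_comp hRc hK hν hν π hπK hπ))
    fun n => hR.two_mul_integral_integral_comp_le hsymm (π n) (hπK n)

theorem integral_half_dirac_add_half_dirac {α : Type*} [MeasurableSpace α]
    [MeasurableSingletonClass α] (x y : α) (f : α → ℝ) :
    ∫ t, f t ∂((1/2 : ℝ≥0∞) • Measure.dirac x + (1/2 : ℝ≥0∞) • Measure.dirac y) =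
      (f x + f y) / 2 := by
  have hint : ∀ z, Integrable f ((1/2 : ℝ≥0∞) • Measure.dirac z) := fun z =>
    (integrable_dirac enorm_lt_top).smul_measure (by norm_num)
  rw [integral_add_measure (hint x) (hint y), integral_smul_measure, integral_smul_measure,
    integral_dirac, integral_dirac]
  norm_num
  ring

theorem stmt6_general (a : ℝ) (ha : 0 < a) (R : ℝ → ℝ → ℝ)
    (hc : Continuous fun p : ℝ × ℝ => R p.1 p.2)
    (hsymm : ∀ s t, R s t = R t s)
    (hpd : ∀ (n : ℕ) (t : Fin n → ℝ) (c : Fin n → ℝ), (∀ i, t i ∈ Set.Icc 0 a) →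
      0 ≤ ∑ i, ∑ j, c i * c j * R (t i) (t j))
    (h2 : ∀ t ∈ Set.Icc 0 a, (R 0 0 + 2 * R 0 a + R a a)/2 ≤ R t 0 + R t a) :
    let μ : Measure ℝ := (1/2 : ℝ≥0∞) • Measure.dirac 0 + (1/2 : ℝ≥0∞) • Measure.dirac a
    (∫ s, ∫ t, R s t ∂μ ∂μ) = (R 0 0 + 2 * R 0 a + R a a)/4 ∧
    ∀ ν : Measure ℝ, IsProbabilityMeasure ν → ν (Set.Icc 0 a)ᶜ = 0 →
      (R 0 0 + 2 * R 0 a + R a a)/4 ≤ ∫ s, ∫ t, R s t ∂ν ∂ν := by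
  intro μ
  have hμ_energy : ∫ s, ∫ t, R s t ∂μ ∂μ = (R 0 0 + 2 * R 0 a + R a a) / 4 := by
    simp only [μ, integral_half_dirac_add_half_dirac, hsymm a 0]
    ring
  refine ⟨hμ_energy, fun ν _ hν => ?_⟩
  have hνK : ∀ᵐ s ∂ν, s ∈ Set.Icc 0 a := ae_iff.2 hν
  have : IsFiniteMeasure μ := ⟨by simp [μ]⟩
  have hμK : ∀ᵐ s ∂μ, s ∈ Set.Icc 0 a := by simp [μ, ae_dirac_eq, ha.le]
  have hpotential : Integrable (fun s => (R s 0 + R s a) / 2) ν := by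
    rw [← Measure.restrict_eq_self_of_ae_mem hνK]
    exact (Continuous.continuousOn (by fun_prop)).integrableOn_compact isCompact_Icc
  have hcross : (R 0 0 + 2 * R 0 a + R a a) / 4 ≤ ∫ s, ∫ t, R s t ∂μ ∂ν := by
    simp only [μ, integral_half_dirac_add_half_dirac]
    calc (R 0 0 + 2 * R 0 a + R a a) / 4 = ∫ _, (R 0 0 + 2 * R 0 a + R a a) / 4 ∂ν := by simp
      _ ≤ ∫ s, (R s 0 + R s a) / 2 ∂ν := integral_mono_ae (integrable_const _) hpotential <| by
        filter_upwards [hνK] with s hs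
        linarith [h2 s hs]
  have hpolar := IsPosDefKernelOn.two_mul_integral_integral_le hpd hsymm hc isCompact_Icc hνK hμK
  linarith

theorem stmt6 (a : ℝ) (ha : 0 < a) (R : ℝ → ℝ → ℝ)
    (hc : Continuous fun p : ℝ × ℝ => R p.1 p.2)
    (hsymm : ∀ s t, R s t = R t s)
    (hpd : ∀ (n : ℕ) (t : Fin n → ℝ) (c : Fin n → ℝ), (∀ i, t i ∈ Set.Icc 0 a) →
      0 ≤ ∑ i, ∑ j, c i * c j * R (t i) (t j))
    (h2 : ∀ t ∈ Set.Icc 0 a, (R 0 0 + 2 * R 0 a + R a a)/2 ≤ R t 0 + R t a)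
    (hpos : 0 < (R 0 0 + 2 * R 0 a + R a a)/2) :
    let μ : Measure ℝ := (1/2 : ℝ≥0∞) • Measure.dirac 0 + (1/2 : ℝ≥0∞) • Measure.dirac a
    (∫ s, ∫ t, R s t ∂μ ∂μ) = (R 0 0 + 2 * R 0 a + R a a)/4 ∧
    ∀ ν : Measure ℝ, IsProbabilityMeasure ν → ν (Set.Icc 0 a)ᶜ = 0 →
      (R 0 0 + 2 * R 0 a + R a a)/4 ≤ ∫ s, ∫ t, R s t ∂ν ∂ν :=
  stmt6_general a ha R hc hsymm hpd h2
end

section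
/- Let R : T × T → ℝ be a continuous symmetric nonnegative-definite kernel on a compact metric space T, and suppose μ* minimizes the energy I(μ) = ∫∫ R(u,v) μ(du)μ(dv) over Borel probability measures on T, with I(μ*) > 0. Then for every v ∈ T, ∫ R(u,v) μ*(du) ≥ I(μ*). -/
open MeasureTheory

private lemma cont_integrable {T : Type*} [MetricSpace T] [CompactSpace T]
    [MeasurableSpace T] [BorelSpace T]
    (f : T → ℝ) (hf : Continuous f)
    (μ : Measure T) [IsFiniteMeasure μ] : Integrable f μ :=
  hf.integrable_of_hasCompactSupport (HasCompactSupport.of_compactSpace f)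

theorem stmt9 {T : Type*} [MetricSpace T] [CompactSpace T]
    [MeasurableSpace T] [BorelSpace T]
    (R : T → T → ℝ) (hc : Continuous fun p : T × T => R p.1 p.2)
    (hsymm : ∀ u v, R u v = R v u)
    (hpd : ∀ (n : ℕ) (t : Fin n → T) (c : Fin n → ℝ),
      0 ≤ ∑ i, ∑ j, c i * c j * R (t i) (t j))
    (μs : Measure T) [IsProbabilityMeasure μs]
    (hmin : ∀ μ : Measure T, IsProbabilityMeasure μ →
      (∫ u₁, ∫ u₂, R u₁ u₂ ∂μs ∂μs) ≤ ∫ u₁, ∫ u₂, R u₁ u₂ ∂μ ∂μ)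
    (hpos : 0 < ∫ u₁, ∫ u₂, R u₁ u₂ ∂μs ∂μs) :
    ∀ v : T, (∫ u₁, ∫ u₂, R u₁ u₂ ∂μs ∂μs) ≤ ∫ u, R u v ∂μs := by
  intro v
  set I : ℝ := ∫ u₁, ∫ u₂, R u₁ u₂ ∂μs ∂μs with hI
  set W : ℝ := ∫ u, R u v ∂μs with hW
  -- continuity of slices
  have hcs : ∀ u : T, Continuous (R u) := fun u =>
    hc.comp (Continuous.prodMk_right u)
  have hcs' : ∀ w : T, Continuous (fun u => R u w) := fun w =>
    hc.comp (Continuous.prodMk_left w)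
  -- continuity of g u = ∫ R u u₂ ∂μs
  have hg : Continuous (fun u₁ => ∫ u₂, R u₁ u₂ ∂μs) := by
    have := continuous_parametric_integral_of_continuous (f := R) (μ := μs)
      (hf := hc) (s := (Set.univ : Set T)) isCompact_univ
    simpa using this
  set g : T → ℝ := fun u₁ => ∫ u₂, R u₁ u₂ ∂μs with hgdef
  have hgv : g v = W := by
    simp only [hgdef, hW]
    exact integral_congr_ae (Filter.Eventually.of_forall fun u => hsymm v u)
  -- the key inequality for ε ∈ (0,1)
  have key : ∀ ε : ℝ, ε ∈ Set.Ioo (0:ℝ) 1 → (2 - ε) * I ≤ 2 * (1 - ε) * W + ε * R v v := by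
    rintro ε ⟨hε0, hε1⟩
    set μ : Measure T := ENNReal.ofReal (1 - ε) • μs + ENNReal.ofReal ε • Measure.dirac v with hμ
    have hεr : (ENNReal.ofReal ε).toReal = ε := ENNReal.toReal_ofReal hε0.le
    have hεr' : (ENNReal.ofReal (1 - ε)).toReal = 1 - ε :=
      ENNReal.toReal_ofReal (by linarith)
    have hprob : IsProbabilityMeasure μ := by
      constructor
      simp only [hμ, Measure.add_apply, Measure.smul_apply, smul_eq_mul,
        measure_univ, mul_one]
      rw [← ENNReal.ofReal_add (by linarith) hε0.le]
      norm_num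
    -- expansion of ∫ f ∂μ for continuous f
    have expand : ∀ f : T → ℝ, Continuous f →
        ∫ u, f u ∂μ = (1 - ε) * ∫ u, f u ∂μs + ε * f v := by
      intro f hf
      rw [hμ, integral_add_measure, integral_smul_measure, integral_smul_measure,
        integral_dirac, hεr, hεr']
      · simp only [smul_eq_mul]; try ring
      · exact (cont_integrable f hf _).smul_measure (by simp)
      · exact (cont_integrable f hf _).smul_measure (by simp)
    -- compute I(μ)
    have inner : ∀ u₁ : T, ∫ u₂, R u₁ u₂ ∂μ = (1 - ε) * g u₁ + ε * R u₁ v :=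
      fun u₁ => expand (R u₁) (hcs u₁)
    have houter : Continuous (fun u₁ => (1 - ε) * g u₁ + ε * R u₁ v) := by
      fun_prop
    have hIμ : ∫ u₁, ∫ u₂, R u₁ u₂ ∂μ ∂μ
        = (1 - ε)^2 * I + 2 * ε * (1 - ε) * W + ε^2 * R v v := by
      have h1 : ∫ u₁, ∫ u₂, R u₁ u₂ ∂μ ∂μ
          = ∫ u₁, ((1 - ε) * g u₁ + ε * R u₁ v) ∂μ :=
        integral_congr_ae (Filter.Eventually.of_forall inner)
      rw [h1, expand _ houter]
      have h2 : ∫ u₁, ((1 - ε) * g u₁ + ε * R u₁ v) ∂μs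
          = (1 - ε) * I + ε * W := by
        rw [integral_add ((cont_integrable g hg _).const_mul _)
          ((cont_integrable _ (hcs' v) _).const_mul _),
          integral_const_mul, integral_const_mul]
      rw [h2, hgv]
      ring
    have := hmin μ hprob
    rw [hIμ] at this
    -- I ≤ (1-ε)²I + 2ε(1-ε)W + ε²Rvv  ⇒ divide by ε
    nlinarith [this, hε0, hε1]
  -- take ε → 0⁺
  have hlim1 : Filter.Tendsto (fun ε : ℝ => (2 - ε) * I) (nhdsWithin 0 (Set.Ioo 0 1))
      (nhds (2 * I)) := by
    have hcont : Continuous (fun ε : ℝ => (2 - ε) * I) := by fun_prop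
    have := hcont.tendsto 0
    simpa using this.mono_left nhdsWithin_le_nhds
  have hlim2 : Filter.Tendsto (fun ε : ℝ => 2 * (1 - ε) * W + ε * R v v)
      (nhdsWithin 0 (Set.Ioo 0 1)) (nhds (2 * W)) := by
    have hcont : Continuous (fun ε : ℝ => 2 * (1 - ε) * W + ε * R v v) := by fun_prop
    have := hcont.tendsto 0
    simpa using this.mono_left nhdsWithin_le_nhds
  have hne : (nhdsWithin (0:ℝ) (Set.Ioo 0 1)).NeBot := by
    apply mem_closure_iff_nhdsWithin_neBot.mp
    rw [closure_Ioo one_ne_zero.symm]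
    exact Set.left_mem_Icc.mpr zero_le_one
  have : 2 * I ≤ 2 * W :=
    le_of_tendsto_of_tendsto hlim1 hlim2
      (Filter.eventually_iff_exists_mem.mpr ⟨Set.Ioo 0 1, self_mem_nhdsWithin, key⟩)
  linarith
end

section
/- Let R : ℝ → ℝ be a continuous, even, positive covariance function of a stationary Gaussian process (in particular nonnegative definite), and suppose R(0) + R(a) > 2R(a/2) for some a > 0. Set ε = (R(0) + R(a) − 2R(a/2))/(3R(0) + R(a) − 4R(a/2)). Then ε ∈ (0,1], and the measure μ = ((1−ε)/2)δ₀ + ((1−ε)/2)δ₁ + ε δ_{1/2} is a probability measure on [0,1] whose energy with respect to the kernel K(u,v) = R(a(u−v)) equals (R(0)² + R(0)R(a) − 2R(a/2)²)/(3R(0) + R(a) − 4R(a/2)). -/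
/-!
By evenness of `R`, the energy of the symmetric measure with weight `ε` at `1/2` is the quadratic
`A - ε N + ε² D / 2` in `ε`, where `A = (R 0 + R a) / 2`, `N = R 0 + R a - 2 R (a/2)` and
`D = 3 R 0 + R a - 4 R (a/2)`. The given `ε = N / D` is its minimiser, with value `A - N² / (2 D)`.
-/

open MeasureTheory

section ThreePoint

variable {α E : Type*} [MeasurableSpace α] [NormedAddCommGroup E]

lemma integrable_smul_dirac [MeasurableSingletonClass α] (f : α → E) {c : ENNReal} (hc : c ≠ ⊤)
    (x : α) :
    Integrable f (c • Measure.dirac x) :=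
  (integrable_dirac enorm_lt_top).smul_measure hc

lemma integral_ofReal_smul_dirac [MeasurableSingletonClass α] [NormedSpace ℝ E] [CompleteSpace E]
    (f : α → E) {c : ℝ} (hc : 0 ≤ c) (x : α) :
    ∫ y, f y ∂(ENNReal.ofReal c • Measure.dirac x) = c • f x := by
  rw [integral_smul_measure, integral_dirac, ENNReal.toReal_ofReal hc]

lemma integral_three_point [MeasurableSingletonClass α] [NormedSpace ℝ E] [CompleteSpace E]
    (f : α → E) {c₁ c₂ c₃ : ℝ} (h₁ : 0 ≤ c₁) (h₂ : 0 ≤ c₂) (h₃ : 0 ≤ c₃)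
    (x₁ x₂ x₃ : α) :
    ∫ y, f y ∂(ENNReal.ofReal c₁ • Measure.dirac x₁ + ENNReal.ofReal c₂ • Measure.dirac x₂ +
      ENNReal.ofReal c₃ • Measure.dirac x₃) = c₁ • f x₁ + c₂ • f x₂ + c₃ • f x₃ := by
  have hi : ∀ (c : ℝ) (x : α), Integrable f (ENNReal.ofReal c • Measure.dirac x) :=
    fun c x ↦ integrable_smul_dirac f ENNReal.ofReal_ne_top x
  rw [integral_add_measure ((hi c₁ x₁).add_measure (hi c₂ x₂)) (hi c₃ x₃),
    integral_add_measure (hi c₁ x₁) (hi c₂ x₂), integral_ofReal_smul_dirac f h₁,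
    integral_ofReal_smul_dirac f h₂, integral_ofReal_smul_dirac f h₃]

lemma isProbabilityMeasure_three_point {c₁ c₂ c₃ : ℝ} (h₁ : 0 ≤ c₁) (h₂ : 0 ≤ c₂) (h₃ : 0 ≤ c₃)
    (hsum : c₁ + c₂ + c₃ = 1) (x₁ x₂ x₃ : α) :
    IsProbabilityMeasure (ENNReal.ofReal c₁ • Measure.dirac x₁ +
      ENNReal.ofReal c₂ • Measure.dirac x₂ + ENNReal.ofReal c₃ • Measure.dirac x₃) := by
  constructor
  simp only [Measure.coe_add, Measure.coe_smul, Pi.add_apply, Pi.smul_apply, measure_univ,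
    smul_eq_mul, mul_one]
  rw [← ENNReal.ofReal_add h₁ h₂, ← ENNReal.ofReal_add (add_nonneg h₁ h₂) h₃, hsum,
    ENNReal.ofReal_one]

end ThreePoint

lemma energy_symmetric_three_point {R : ℝ → ℝ} (he : ∀ t, R (-t) = R t) (a : ℝ) {ε : ℝ}
    (hε₀ : 0 ≤ ε) (hε₁ : ε ≤ 1) :
    ∫ u, ∫ v, R (a * (u - v)) ∂(ENNReal.ofReal ((1 - ε) / 2) • Measure.dirac 0 +
        ENNReal.ofReal ((1 - ε) / 2) • Measure.dirac 1 + ENNReal.ofReal ε • Measure.dirac (1 / 2))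
      ∂(ENNReal.ofReal ((1 - ε) / 2) • Measure.dirac 0 +
        ENNReal.ofReal ((1 - ε) / 2) • Measure.dirac 1 + ENNReal.ofReal ε • Measure.dirac (1 / 2)) =
      (1 - ε) ^ 2 / 2 * (R 0 + R a) + ε ^ 2 * R 0 + 2 * ε * (1 - ε) * R (a / 2) := by
  have hw : 0 ≤ (1 - ε) / 2 := by linarith
  have h₁ : R (a * (0 - 1)) = R a := by rw [← he]; ring_nf
  have h₂ : R (a * (0 - 1 / 2)) = R (a / 2) := by rw [← he]; ring_nf
  have h₃ : R (a * (1 / 2 - 1)) = R (a / 2) := by rw [← he]; ring_nf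
  have h₄ : R (a * (1 - 1 / 2)) = R (a / 2) := by ring_nf
  simp only [integral_three_point _ hw hw hε₀, smul_eq_mul, h₁, h₂, h₃, h₄, sub_zero, sub_self,
    mul_zero, mul_one, mul_one_div]
  ring

lemma symmetric_three_point_energy_eq_of_mul_eq {r₀ r₁ rₕ ε : ℝ} (hD : 3 * r₀ + r₁ - 4 * rₕ ≠ 0)
    (hε : ε * (3 * r₀ + r₁ - 4 * rₕ) = r₀ + r₁ - 2 * rₕ) :
    (1 - ε) ^ 2 / 2 * (r₀ + r₁) + ε ^ 2 * r₀ + 2 * ε * (1 - ε) * rₕ =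
      (r₀ ^ 2 + r₀ * r₁ - 2 * rₕ ^ 2) / (3 * r₀ + r₁ - 4 * rₕ) := by
  rw [eq_div_iff hD]
  linear_combination (ε * (3 * r₀ + r₁ - 4 * rₕ) - (r₀ + r₁ - 2 * rₕ)) / 2 * hε

theorem stmt14_general (R : ℝ → ℝ) (he : ∀ t, R (-t) = R t)
    (a : ℝ) (hcond : 2 * R (a/2) < R 0 + R a) (hden : R (a/2) < R 0) :
    let ε := (R 0 + R a - 2 * R (a/2)) / (3 * R 0 + R a - 4 * R (a/2))
    let μ : Measure ℝ :=
      ENNReal.ofReal ((1-ε)/2) • Measure.dirac 0 +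
      ENNReal.ofReal ((1-ε)/2) • Measure.dirac 1 +
      ENNReal.ofReal ε • Measure.dirac (1/2)
    0 < ε ∧ ε ≤ 1 ∧ IsProbabilityMeasure μ ∧
    (∫ u, ∫ v, R (a * (u - v)) ∂μ ∂μ) =
      (R 0 ^ 2 + R 0 * R a - 2 * R (a/2) ^ 2) / (3 * R 0 + R a - 4 * R (a/2)) := by
  intro ε μ
  have hD : 0 < 3 * R 0 + R a - 4 * R (a/2) := by linarith
  have hε₀ : 0 < ε := div_pos (by linarith) hD
  have hε₁ : ε ≤ 1 := (div_le_one hD).2 (by linarith)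
  have hw : 0 ≤ (1 - ε) / 2 := by linarith
  refine ⟨hε₀, hε₁, isProbabilityMeasure_three_point hw hw hε₀.le (by ring) _ _ _, ?_⟩
  rw [energy_symmetric_three_point he a hε₀.le hε₁]
  exact symmetric_three_point_energy_eq_of_mul_eq hD.ne' (div_mul_cancel₀ _ hD.ne')

theorem stmt14 (R : ℝ → ℝ) (hc : Continuous R) (he : ∀ t, R (-t) = R t)
    (hposR : ∀ t, 0 < R t)
    (hpd : ∀ (n : ℕ) (t c : Fin n → ℝ), 0 ≤ ∑ i, ∑ j, c i * c j * R (t i - t j))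
    (a : ℝ) (ha : 0 < a) (hcond : 2 * R (a/2) < R 0 + R a) (hden : R (a/2) < R 0) :
    let ε := (R 0 + R a - 2 * R (a/2)) / (3 * R 0 + R a - 4 * R (a/2))
    let μ : Measure ℝ :=
      ENNReal.ofReal ((1-ε)/2) • Measure.dirac 0 +
      ENNReal.ofReal ((1-ε)/2) • Measure.dirac 1 +
      ENNReal.ofReal ε • Measure.dirac (1/2)
    0 < ε ∧ ε ≤ 1 ∧ IsProbabilityMeasure μ ∧
    (∫ u, ∫ v, R (a * (u - v)) ∂μ ∂μ) =
      (R 0 ^ 2 + R 0 * R a - 2 * R (a/2) ^ 2) / (3 * R 0 + R a - 4 * R (a/2)) :=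
  stmt14_general R he a hcond hden
end
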